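/- arXiv:2210.02495 — 3 statements merged into one kernel-verified Lean document; each statement's English description precedes it below -/
import Mathlib

section
/- If X is a separable Banach space and τ is an admissible topology on X, then there exists a countable norming subset S of the τ-continuous dual X*_τ, i.e., a countable set S of τ-continuous linear functionals, each of operator norm at most 1, such that ‖x‖ = sup_{Λ ∈ S} |Λx| for all x ∈ X. -/
open Filter Topology MeasureTheory Finset

noncomputable section

/-- The topology σ(X, S) generated by a set S of linear functionals. -/
def sigmaTop {X : Type*} [AddCommGroup X] [Module ℝ X] (S : Set (X →ₗ[ℝ] ℝ)) :
    TopologicalSpace X :=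
  ⨅ f ∈ S, TopologicalSpace.induced f inferInstance

/-- An admissible topology on a Banach space: Hausdorff, locally convex, a vector space
topology weaker than or equal to the norm topology, with the closed unit ball closed, and
(when X is not separable) at least as strong as the weak topology. -/
def IsAdmissible (X : Type*) [NormedAddCommGroup X] [NormedSpace ℝ X]
    (τ : TopologicalSpace X) : Prop :=
  @T2Space X τ ∧ @LocallyConvexSpace ℝ X _ _ _ _ τ ∧ @IsTopologicalAddGroup X τ _ ∧
    @ContinuousSMul ℝ X _ _ τ ∧
    (inferInstance : TopologicalSpace X) ≤ τ ∧
    @IsClosed X τ (Metric.closedBall 0 1) ∧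
    (¬ TopologicalSpace.SeparableSpace X →
      τ ≤ sigmaTop {f : X →ₗ[ℝ] ℝ | Continuous f})

/-!
Separating a point outside the τ-closed unit ball from it by Hahn–Banach in the locally convex
topology τ gives, for every `x` and every `r < ‖x‖`, a τ-continuous functional of norm at most
one exceeding `r` at `x`. Only countably many are needed: one for each point of a countable
dense set and each rational level, and density spreads the estimate to all of `X`.
-/

theorem LinearMap.norm_apply_le_of_forall_closedBall_lt {X : Type*} [NormedAddCommGroup X]
    [NormedSpace ℝ X] (f : X →ₗ[ℝ] ℝ) {u : ℝ}
    (hf : ∀ z ∈ Metric.closedBall (0 : X) 1, f z < u) (x : X) : ‖f x‖ ≤ u * ‖x‖ := by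
  have hball : ∀ z ∈ Metric.closedBall (0 : X) 1, ‖f z‖ ≤ u := by
    intro z hz
    have hz' : -z ∈ Metric.closedBall (0 : X) 1 := by simpa using hz
    have := hf (-z) hz'
    rw [map_neg] at this
    exact (abs_lt.mpr ⟨by linarith, hf z hz⟩).le
  simpa using f.bound_of_ball_bound' one_pos u hball x

section NormingFamily

variable {X : Type*} [SeminormedAddCommGroup X] [NormedSpace ℝ X] {S : Set (X →ₗ[ℝ] ℝ)}

theorem exists_lt_apply_of_dense {D : Set X} (hD : Dense D)
    (hS : ∀ f ∈ S, ∀ x, ‖f x‖ ≤ ‖x‖) (hDS : ∀ d ∈ D, ∀ r < ‖d‖, ∃ f ∈ S, r < f d)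
    {x : X} {c : ℝ} (hc : c < ‖x‖) : ∃ f ∈ S, c < f x := by
  set ε := (‖x‖ - c) / 2 with hε
  obtain ⟨d, hdD, hxd⟩ := hD.exists_dist_lt x (show 0 < ε by linarith)
  rw [dist_eq_norm] at hxd
  have hd : c + ε < ‖d‖ := by linarith [norm_sub_norm_le x d]
  obtain ⟨f, hfS, hfd⟩ := hDS d hdD _ hd
  refine ⟨f, hfS, ?_⟩
  have hfxd : f d - f x ≤ ‖x - d‖ := by
    rw [← map_sub, ← norm_neg, neg_sub]
    exact (le_abs_self _).trans (hS f hfS _)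
  linarith

theorem norm_eq_iSup_of_forall_lt_apply (hS : ∀ f ∈ S, ∀ x, ‖f x‖ ≤ ‖x‖)
    (hlt : ∀ x : X, ∀ c < ‖x‖, ∃ f ∈ S, c < f x) (x : X) :
    ‖x‖ = ⨆ f : S, ‖(f : X →ₗ[ℝ] ℝ) x‖ := by
  have : Nonempty S := by
    obtain ⟨f, hf, -⟩ := hlt x (-1) (by linarith [norm_nonneg x])
    exact ⟨⟨f, hf⟩⟩
  have hbdd : BddAbove (Set.range fun f : S => ‖(f : X →ₗ[ℝ] ℝ) x‖) :=
    ⟨‖x‖, by rintro _ ⟨f, rfl⟩; exact hS f f.2 x⟩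
  refine le_antisymm (le_of_forall_lt fun c hc => ?_) (ciSup_le fun f => hS f f.2 x)
  obtain ⟨f, hf, hcf⟩ := hlt x c hc
  exact (hcf.trans_le (le_abs_self _)).trans_le (le_ciSup hbdd ⟨f, hf⟩)

end NormingFamily

section Admissible

variable {X : Type*} [NormedAddCommGroup X] [NormedSpace ℝ X] {τ : TopologicalSpace X}

theorem IsAdmissible.exists_norm_le_one_lt_apply_of_one_lt_norm (hτ : IsAdmissible X τ)
    {d : X} (hd : 1 < ‖d‖) :
    ∃ g : X →ₗ[ℝ] ℝ, Continuous[τ, _] g ∧ (∀ x, ‖g x‖ ≤ ‖x‖) ∧ 1 < g d := by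
  obtain ⟨-, hlcs, hadd, hsmul, -, hball, -⟩ := hτ
  have hdball : d ∉ Metric.closedBall (0 : X) 1 := by simpa using hd
  obtain ⟨f, u, hfu, hud⟩ := @geometric_hahn_banach_closed_point X τ _ _ _ d hadd hsmul hlcs
    (convex_closedBall 0 1) hball hdball
  have hu : 0 < u := by simpa using hfu 0 (by simp)
  refine ⟨u⁻¹ • (f : X →ₗ[ℝ] ℝ), f.cont.const_smul u⁻¹, fun x => ?_, ?_⟩
  · have hfx := (f : X →ₗ[ℝ] ℝ).norm_apply_le_of_forall_closedBall_lt hfu x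
    rw [LinearMap.smul_apply, norm_smul, norm_inv, Real.norm_of_nonneg hu.le, inv_mul_le_iff₀ hu]
    exact hfx
  · simpa [lt_inv_mul_iff₀ hu] using hud

theorem IsAdmissible.exists_norm_le_one_lt_apply (hτ : IsAdmissible X τ) {d : X} {r : ℝ}
    (hr : r < ‖d‖) : ∃ g : X →ₗ[ℝ] ℝ, Continuous[τ, _] g ∧ (∀ x, ‖g x‖ ≤ ‖x‖) ∧ r < g d := by
  rcases lt_or_ge r 0 with hr0 | hr0
  · exact ⟨0, continuous_const, by simp, by simpa using hr0⟩
  obtain ⟨q, hrq, hqd⟩ := _root_.exists_between hr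
  have hq : 0 < q := hr0.trans_lt hrq
  obtain ⟨g, hgτ, hg, hgd⟩ := hτ.exists_norm_le_one_lt_apply_of_one_lt_norm
    (d := q⁻¹ • d) (by rwa [norm_smul, norm_inv, Real.norm_of_nonneg hq.le, one_lt_inv_mul₀ hq])
  refine ⟨g, hgτ, hg, hrq.trans ?_⟩
  rwa [map_smul, smul_eq_mul, one_lt_inv_mul₀ hq] at hgd

end Admissible

theorem exists_countable_norming_general (X : Type*) [NormedAddCommGroup X] [NormedSpace ℝ X]
    [TopologicalSpace.SeparableSpace X]
    (τ : TopologicalSpace X) (hτ : IsAdmissible X τ) :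
    ∃ S : Set (X →ₗ[ℝ] ℝ), S.Countable ∧
      (∀ f ∈ S, @Continuous X ℝ τ _ f) ∧
      (∀ f ∈ S, ∀ x : X, ‖f x‖ ≤ ‖x‖) ∧
      (∀ x : X, ‖x‖ = ⨆ f : S, ‖(f : X →ₗ[ℝ] ℝ) x‖) := by
  -- `τ` is a local instance here, so the norm topology has to be named.
  obtain ⟨D, hDc, hD⟩ :=
    @TopologicalSpace.exists_countable_dense X UniformSpace.toTopologicalSpace ‹_›
  have hchoice : ∀ (d : X) (q : ℚ), ∃ g : X →ₗ[ℝ] ℝ, Continuous[τ, _] g ∧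
      (∀ x, ‖g x‖ ≤ ‖x‖) ∧ ((q : ℝ) < ‖d‖ → q < g d) := by
    intro d q
    by_cases hq : (q : ℝ) < ‖d‖
    · obtain ⟨g, hgτ, hg, hgd⟩ := hτ.exists_norm_le_one_lt_apply hq
      exact ⟨g, hgτ, hg, fun _ => hgd⟩
    · exact ⟨0, continuous_const, by simp, fun h => absurd h hq⟩
  choose g hgτ hg hgd using hchoice
  have : Countable D := hDc.to_subtype
  set S := Set.range fun p : D × ℚ => g p.1 p.2
  have hS : ∀ f ∈ S, ∀ x, ‖f x‖ ≤ ‖x‖ := by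
    rintro _ ⟨p, rfl⟩
    exact hg _ _
  have hDS : ∀ d ∈ D, ∀ r < ‖d‖, ∃ f ∈ S, r < f d := by
    intro d hd r hr
    obtain ⟨q, hrq, hqd⟩ := exists_rat_btwn hr
    exact ⟨g d q, ⟨(⟨d, hd⟩, q), rfl⟩, hrq.trans (hgd d q hqd)⟩
  refine ⟨S, Set.countable_range _, ?_, hS, ?_⟩
  · rintro _ ⟨p, rfl⟩
    exact hgτ _ _
  · exact norm_eq_iSup_of_forall_lt_apply hS fun x c hc => exists_lt_apply_of_dense hD hS hDS hc

/-- a separable Banach space with an admissible topology τ admits a countable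
norming set of τ-continuous functionals of operator norm at most 1. -/
theorem exists_countable_norming (X : Type*) [NormedAddCommGroup X] [NormedSpace ℝ X]
    [CompleteSpace X] [TopologicalSpace.SeparableSpace X]
    (τ : TopologicalSpace X) (hτ : IsAdmissible X τ) :
    ∃ S : Set (X →ₗ[ℝ] ℝ), S.Countable ∧
      (∀ f ∈ S, @Continuous X ℝ τ _ f) ∧
      (∀ f ∈ S, ∀ x : X, ‖f x‖ ≤ ‖x‖) ∧
      (∀ x : X, ‖x‖ = ⨆ f : S, ‖(f : X →ₗ[ℝ] ℝ) x‖) :=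
  exists_countable_norming_general X τ hτ
end
end

section
/- Let X be a separable Banach space and S a countable norming set of functionals of norm at most 1. Then the set P_II' of sequences (xₙ) ∈ X^ℕ whose partial sums converge in the σ(X, S)-topology to some element of X is a Borel subset of X^ℕ. -/
/-!
Since `S` is norming, `x ↦ (f x)_{f ∈ S}` is an isometry of the complete space `X` into `ℓ^∞(S)`,
so a family `(L f)_{f ∈ S}` is of the form `(f l)_{f ∈ S}` exactly when it is a uniform limit on `S`
of families `(f d)_{f ∈ S}` with `d` in a countable dense set `D`. Applied to the limits
`L f = lim_N f (∑_{n ≤ N} xₙ)`, which are Borel functions of `x`, this expresses the set as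
a countable combination of Borel sets.
-/

open Filter Topology MeasureTheory

section NormingSet

variable {X : Type*} [NormedAddCommGroup X] [NormedSpace ℝ X] {S : Set (X →L[ℝ] ℝ)}

lemma norm_le_of_forall_abs_apply_le (hnorming : ∀ x : X, ‖x‖ = ⨆ f : S, ‖(f : X →L[ℝ] ℝ) x‖)
    {x : X} {c : ℝ} (hc : 0 ≤ c) (h : ∀ f ∈ S, |f x| ≤ c) : ‖x‖ ≤ c := by
  rw [hnorming]
  exact Real.iSup_le (fun f => h f f.2) hc

lemma exists_mem_forall_abs_apply_sub_le {D : Set X} (hD : Dense D) (hnorm : ∀ f ∈ S, ‖f‖ ≤ 1)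
    (l : X) {ε : ℝ} (hε : 0 < ε) : ∃ d ∈ D, ∀ f ∈ S, |f d - f l| ≤ ε := by
  obtain ⟨d, hdD, hdl⟩ := hD.exists_dist_lt l hε
  refine ⟨d, hdD, fun f hf => ?_⟩
  calc |f d - f l| = ‖f (d - l)‖ := by rw [map_sub, Real.norm_eq_abs]
    _ ≤ ‖f‖ * ‖d - l‖ := f.le_opNorm _
    _ ≤ 1 * ‖d - l‖ := by gcongr; exact hnorm f hf
    _ ≤ ε := by rw [one_mul, ← dist_eq_norm, dist_comm]; exact hdl.le

lemma exists_forall_apply_eq_of_abs_apply_sub_le [CompleteSpace X]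
    (hnorming : ∀ x : X, ‖x‖ = ⨆ f : S, ‖(f : X →L[ℝ] ℝ) x‖) (L : (X →L[ℝ] ℝ) → ℝ) (d : ℕ → X)
    (hd : ∀ k : ℕ, ∀ f ∈ S, |f (d k) - L f| ≤ 1 / (k + 1)) : ∃ l : X, ∀ f ∈ S, f l = L f := by
  have hdist : ∀ n m N : ℕ, N ≤ n → N ≤ m → dist (d n) (d m) ≤ 2 * (1 / (N + 1)) := by
    intro n m N hn hm
    have hn' : 1 / ((n : ℝ) + 1) ≤ 1 / (N + 1) := by gcongr
    have hm' : 1 / ((m : ℝ) + 1) ≤ 1 / (N + 1) := by gcongr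
    rw [dist_eq_norm]
    refine norm_le_of_forall_abs_apply_le hnorming (by positivity) fun f hf => ?_
    calc |f (d n - d m)| = |(f (d n) - L f) - (f (d m) - L f)| := by rw [map_sub]; ring_nf
      _ ≤ |f (d n) - L f| + |f (d m) - L f| := abs_sub _ _
      _ ≤ 2 * (1 / (N + 1)) := by linarith [hd n f hf, hd m f hf]
  have hcauchy : CauchySeq d := cauchySeq_of_le_tendsto_0 _ hdist <| by
    simpa using tendsto_one_div_add_atTop_nhds_zero_nat.const_mul (2 : ℝ)
  obtain ⟨l, hl⟩ := cauchySeq_tendsto_of_complete hcauchy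
  refine ⟨l, fun f hf => tendsto_nhds_unique ((f.continuous.tendsto l).comp hl) ?_⟩
  rw [tendsto_iff_dist_tendsto_zero]
  exact squeeze_zero (fun _ => dist_nonneg) (fun k => hd k f hf)
    tendsto_one_div_add_atTop_nhds_zero_nat

lemma exists_forall_apply_eq_iff [CompleteSpace X] {D : Set X} (hD : Dense D)
    (hnorm : ∀ f ∈ S, ‖f‖ ≤ 1) (hnorming : ∀ x : X, ‖x‖ = ⨆ f : S, ‖(f : X →L[ℝ] ℝ) x‖)
    (L : (X →L[ℝ] ℝ) → ℝ) :
    (∃ l : X, ∀ f ∈ S, f l = L f) ↔ ∀ k : ℕ, ∃ d ∈ D, ∀ f ∈ S, |f d - L f| ≤ 1 / (k + 1) := by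
  constructor
  · rintro ⟨l, hl⟩ k
    obtain ⟨d, hdD, hd⟩ := exists_mem_forall_abs_apply_sub_le hD hnorm l (ε := 1 / (k + 1))
      (by positivity)
    exact ⟨d, hdD, fun f hf => hl f hf ▸ hd f hf⟩
  · intro h
    choose d _ hd using h
    exact exists_forall_apply_eq_of_abs_apply_sub_le hnorming L d hd

theorem measurableSet_exists_forall_tendsto_apply [CompleteSpace X]
    [TopologicalSpace.SeparableSpace X] {α : Type*} [MeasurableSpace α] (hScount : S.Countable)
    (hnorm : ∀ f ∈ S, ‖f‖ ≤ 1) (hnorming : ∀ x : X, ‖x‖ = ⨆ f : S, ‖(f : X →L[ℝ] ℝ) x‖)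
    {s : ℕ → α → X} (hs : ∀ f ∈ S, ∀ N, Measurable fun a => f (s N a)) :
    MeasurableSet {a | ∃ l : X, ∀ f ∈ S, Tendsto (fun N => f (s N a)) atTop (𝓝 (f l))} := by
  obtain ⟨D, hDc, hD⟩ := TopologicalSpace.exists_countable_dense X
  set lim : (X →L[ℝ] ℝ) → α → ℝ := fun f a => limUnder atTop fun N => f (s N a)
  have hlim : ∀ f ∈ S, Measurable (lim f) := fun f hf =>
    (StronglyMeasurable.limUnder fun N => (hs f hf N).stronglyMeasurable).measurable
  have hset : {a | ∃ l : X, ∀ f ∈ S, Tendsto (fun N => f (s N a)) atTop (𝓝 (f l))} =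
      (⋂ f ∈ S, {a | ∃ c, Tendsto (fun N => f (s N a)) atTop (𝓝 c)}) ∩
        ⋂ k : ℕ, ⋃ d ∈ D, ⋂ f ∈ S, {a | |f d - lim f a| ≤ 1 / (k + 1)} := by
    ext a
    simp only [Set.mem_ofPred_eq, Set.mem_inter_iff, Set.mem_iInter, Set.mem_iUnion, exists_prop,
      ← exists_forall_apply_eq_iff hD hnorm hnorming (lim · a)]
    constructor
    · rintro ⟨l, hl⟩
      exact ⟨fun f hf => ⟨f l, hl f hf⟩, l, fun f hf => (hl f hf).limUnder_eq.symm⟩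
    · rintro ⟨hconv, l, hl⟩
      exact ⟨l, fun f hf => hl f hf ▸ tendsto_nhds_limUnder (hconv f hf)⟩
  rw [hset]
  refine .inter (.biInter hScount fun f hf => measurableSet_exists_tendsto (hs f hf)) ?_
  exact .iInter fun k => .biUnion hDc fun d _ => .biInter hScount fun f hf =>
    measurableSet_le (measurable_const.sub (hlim f hf)).abs measurable_const

end NormingSet

/-- the set of σ(X,S)-weakly summable formal series is Borel in X^ℕ, for a
countable norming set S of functionals of norm at most 1. -/
theorem weakly_summable_set_borel {X : Type*} [NormedAddCommGroup X] [NormedSpace ℝ X]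
    [CompleteSpace X] [TopologicalSpace.SeparableSpace X]
    (S : Set (X →L[ℝ] ℝ)) (hScount : S.Countable)
    (hnorm : ∀ f ∈ S, ‖f‖ ≤ 1)
    (hnorming : ∀ x : X, ‖x‖ = ⨆ f : S, ‖(f : X →L[ℝ] ℝ) x‖) :
    MeasurableSet[borel (ℕ → X)]
      {x : ℕ → X | ∃ l : X, ∀ f ∈ S,
        Tendsto (fun N => f (∑ n ∈ Finset.range (N + 1), x n)) atTop (nhds (f l))} := by
  let : MeasurableSpace (ℕ → X) := borel (ℕ → X)
  have : BorelSpace (ℕ → X) := ⟨rfl⟩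
  refine measurableSet_exists_forall_tendsto_apply hScount hnorm hnorming fun f _ N => ?_
  exact (f.continuous.comp (continuous_finsetSum _ fun n _ => continuous_apply n)).measurable
end

section
/- Let X be a separable Banach space, (γₙ) independent symmetric random variables, Σ_N = Σ_{n=0}^N γₙxₙ. If Σ_N → Σ_∞ in probability (i.e., P[‖Σ_∞ − Σ_N‖ > ε] → 0 for all ε > 0), then Σ_N → Σ_∞ almost surely in norm. The proof uses Lévy's maximal inequality: P[∃ N₀ ≤ N : ‖Σ_{N₀}‖ ≥ R] ≤ 2P[‖Σ_N‖ ≥ R]. -/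
/-!
Lévy's maximal inequality is a reflection principle. Flipping the signs of all `γₙ` with `n > k`
preserves the joint law of `(γₙ)` (a product of symmetric laws), fixes `Σ_0, …, Σ_k` and
replaces `Σ_N` by `2 Σ_k - Σ_N`; so if `k` is the first index in `[M, N]` with
`‖Σ_k - Σ_M‖ > ε`, one of `Σ_N` and its reflection is more than `ε` away from `Σ_M`, giving
`P[max_{M ≤ k ≤ N} ‖Σ_k - Σ_M‖ > ε] ≤ 2 P[‖Σ_N - Σ_M‖ > ε]`. Convergence in probability makes
the right side small uniformly in `N ≥ M` for large `M`, so `sup_{k ≥ M} ‖Σ_k - Σ_M‖` tends to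
`0` in probability and the partial sums are almost surely Cauchy. A subsequence converges almost
surely to `Σ_∞`, and a Cauchy sequence with a convergent subsequence converges.
-/

open Filter Topology MeasureTheory Finset ProbabilityTheory

open scoped ENNReal

noncomputable section

theorem measure_lt_norm_sub_le_add {α E : Type*} [MeasurableSpace α] [SeminormedAddCommGroup E]
    (μ : Measure α) (f g h : α → E) (ε : ℝ) :
    μ {a | ε < ‖f a - g a‖} ≤ μ {a | ε / 2 ≤ ‖f a - h a‖} + μ {a | ε / 2 ≤ ‖g a - h a‖} := by
  refine (measure_mono fun a ha => ?_).trans (measure_union_le _ _)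
  by_contra hout
  simp only [Set.mem_union, Set.mem_ofPred_eq, not_or, not_le] at ha hout
  have := norm_sub_le_norm_sub_add_norm_sub (f a) (h a) (g a)
  rw [norm_sub_rev (h a)] at this
  linarith

theorem ae_cauchySeq_of_forall_iInf_measure_eq_zero {α E : Type*} [MeasurableSpace α]
    [PseudoMetricSpace E] {μ : Measure α} {f : ℕ → α → E}
    (h : ∀ ε > 0, ⨅ M, μ {a | ∃ k ≥ M, ε < dist (f k a) (f M a)} = 0) :
    ∀ᵐ a ∂μ, CauchySeq fun n => f n a := by
  have hosc : ∀ m : ℕ, ∀ᵐ a ∂μ, ∃ M, ∀ k ≥ M, dist (f k a) (f M a) ≤ 1 / (m + 1) := by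
    intro m
    rw [ae_iff]
    refine nonpos_iff_eq_zero.1 <| (le_iInf fun M => measure_mono fun a ha => ?_).trans
      (h _ (Nat.one_div_pos_of_nat (n := m))).le
    simp only [Set.mem_ofPred_eq, not_exists, not_forall, not_le, exists_prop] at ha
    exact ha M
  filter_upwards [ae_all_iff.2 hosc] with a ha
  refine Metric.cauchySeq_iff'.2 fun ε hε => ?_
  obtain ⟨m, hm⟩ := exists_nat_one_div_lt hε
  obtain ⟨M, hM⟩ := ha m
  exact ⟨M, fun k hk => (hM k hk).trans_lt hm⟩

theorem MeasureTheory.TendstoInMeasure.ae_tendsto_of_ae_cauchySeq {α E : Type*}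
    [MeasurableSpace α] [PseudoMetricSpace E] {μ : Measure α} {f : ℕ → α → E} {g : α → E}
    (hfg : TendstoInMeasure μ f atTop g) (hf : ∀ᵐ a ∂μ, CauchySeq fun n => f n a) :
    ∀ᵐ a ∂μ, Tendsto (fun n => f n a) atTop (𝓝 (g a)) := by
  obtain ⟨ns, hns, hns_ae⟩ := hfg.exists_seq_tendsto_ae
  filter_upwards [hf, hns_ae] with a hcauchy hsub
  exact tendsto_nhds_of_cauchySeq_of_subseq hcauchy hns.tendsto_atTop hsub

section Reflection

variable {α : Type*}

def firstPassage (u : ℕ → α → ℝ) (ε : ℝ) (M k : ℕ) : Set α :=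
  {a | ε < u k a} ∩ ⋂ j ∈ Ico M k, {a | u j a ≤ ε}

theorem pairwiseDisjoint_firstPassage (u : ℕ → α → ℝ) (ε : ℝ) (M : ℕ) :
    (Set.Ici M).PairwiseDisjoint (firstPassage u ε M) := by
  have hdisj {k l : ℕ} (hMk : M ≤ k) (hkl : k < l) :
      Disjoint (firstPassage u ε M k) (firstPassage u ε M l) :=
    Set.disjoint_left.2 fun a ha hb =>
      ha.1.not_ge (show u k a ≤ ε from Set.mem_iInter₂.1 hb.2 k (mem_Ico.2 ⟨hMk, hkl⟩))
  intro k hk l hl hkl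
  rcases hkl.lt_or_gt with h | h
  exacts [hdisj hk h, (hdisj hl h).symm]

theorem setOf_exists_lt_eq_biUnion_firstPassage (u : ℕ → α → ℝ) (ε : ℝ) (M N : ℕ) :
    {a | ∃ k ∈ Icc M N, ε < u k a} = ⋃ k ∈ Icc M N, firstPassage u ε M k := by
  classical
  ext a
  simp only [firstPassage, Set.mem_ofPred_eq, Set.mem_iUnion, Set.mem_inter_iff,
    Set.mem_iInter, exists_prop]
  refine ⟨fun hex => ?_, fun ⟨k, hk, ha, _⟩ => ⟨k, hk, ha⟩⟩
  obtain ⟨hk, ha⟩ := Nat.find_spec hex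
  refine ⟨Nat.find hex, hk, ha, fun j hj => not_lt.1 fun h => ?_⟩
  obtain ⟨hMj, hjk⟩ := mem_Ico.1 hj
  exact Nat.find_min hex hjk ⟨mem_Icc.2 ⟨hMj, hjk.le.trans (mem_Icc.1 hk).2⟩, h⟩

variable [MeasurableSpace α]

theorem measurableSet_firstPassage {u : ℕ → α → ℝ} (hu : ∀ k, Measurable (u k)) (ε : ℝ)
    (M k : ℕ) : MeasurableSet (firstPassage u ε M k) :=
  (measurableSet_lt measurable_const (hu k)).inter <|
    Finset.measurableSet_biInter _ fun j _ => measurableSet_le (hu j) measurable_const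

variable {X : Type*} [NormedAddCommGroup X] [NormedSpace ℝ X] [MeasurableSpace X]
  [OpensMeasurableSpace X]

theorem measure_exists_lt_norm_le_two_mul {μ : Measure α} {S : ℕ → α → X} {T : ℕ → α → α}
    {M N : ℕ} {ε : ℝ} (hS : ∀ k, Measurable (S k)) (hT : ∀ k, MeasurePreserving (T k) μ μ)
    (hST : ∀ j k, M ≤ j → j ≤ k → ∀ a, S j (T k a) = S j a)
    (hSN : ∀ k, M ≤ k → k ≤ N → ∀ a, S N a + S N (T k a) = (2 : ℝ) • S k a) :
    μ {a | ∃ k ∈ Icc M N, ε < ‖S k a‖} ≤ 2 * μ {a | ε < ‖S N a‖} := by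
  set E := {a | ε < ‖S N a‖}
  have hE : MeasurableSet E := measurableSet_lt measurable_const (hS N).norm
  set A := firstPassage (fun k a => ‖S k a‖) ε M
  have hA k : MeasurableSet (A k) := measurableSet_firstPassage (fun k => (hS k).norm) ε M k
  have hA_disj : (Icc M N : Set ℕ).PairwiseDisjoint A :=
    (pairwiseDisjoint_firstPassage _ ε M).subset fun k hk => (mem_Icc.1 hk).1
  -- `T k` fixes `A k`, and on `A k` the norms of `S N` and `S N ∘ T k` add up to more than `2 ε`
  have hA_le k (hk : k ∈ Icc M N) : μ (A k) ≤ 2 * μ (A k ∩ E) := by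
    obtain ⟨hMk, hkN⟩ := mem_Icc.1 hk
    have hTA : T k ⁻¹' A k = A k := by
      ext a
      simp only [A, firstPassage, Set.mem_preimage, Set.mem_inter_iff, Set.mem_iInter,
        Set.mem_ofPred_eq, hST k k hMk le_rfl]
      refine and_congr_right fun _ => forall₂_congr fun j hj => ?_
      rw [hST j k (mem_Ico.1 hj).1 (mem_Ico.1 hj).2.le]
    have hcover : A k ⊆ (A k ∩ E) ∪ T k ⁻¹' (A k ∩ E) := by
      intro a ha
      rw [Set.preimage_inter, hTA, ← Set.inter_union_distrib_left]
      refine ⟨ha, by_contra fun hout => ?_⟩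
      simp only [Set.mem_union, Set.mem_preimage, E, Set.mem_ofPred_eq, not_or, not_lt] at hout
      have hsum := norm_add_le (S N a) (S N (T k a))
      rw [hSN k hMk hkN, norm_smul, Real.norm_two] at hsum
      linarith [show ε < ‖S k a‖ from ha.1]
    calc μ (A k) ≤ μ (A k ∩ E) + μ (T k ⁻¹' (A k ∩ E)) :=
          (measure_mono hcover).trans (measure_union_le _ _)
      _ = 2 * μ (A k ∩ E) := by
          rw [(hT k).measure_preimage ((hA k).inter hE).nullMeasurableSet, two_mul]
  calc μ {a | ∃ k ∈ Icc M N, ε < ‖S k a‖} = ∑ k ∈ Icc M N, μ (A k) := by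
        rw [setOf_exists_lt_eq_biUnion_firstPassage,
          measure_biUnion_finset hA_disj fun k _ => hA k]
    _ ≤ ∑ k ∈ Icc M N, 2 * μ (A k ∩ E) := sum_le_sum hA_le
    _ = 2 * μ (⋃ k ∈ Icc M N, A k ∩ E) := by
        rw [← mul_sum, measure_biUnion_finset (hA_disj.mono fun _ => Set.inter_subset_left)
          fun k _ => (hA k).inter hE]
    _ ≤ 2 * μ E := by gcongr; exact Set.iUnion₂_subset fun k _ => Set.inter_subset_right

end Reflection

def signFlip {ι : Type*} (p : ι → Prop) [DecidablePred p] (v : ι → ℝ) : ι → ℝ :=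
  fun i => if p i then -v i else v i

theorem measurable_signFlip {ι : Type*} (p : ι → Prop) [DecidablePred p] :
    Measurable (signFlip p) := by
  refine measurable_pi_lambda _ fun i => ?_
  unfold signFlip
  split_ifs
  exacts [(measurable_pi_apply i).neg, measurable_pi_apply i]

theorem measurePreserving_signFlip {ι Ω : Type*} [MeasurableSpace Ω] {P : Measure Ω}
    [IsProbabilityMeasure P] {γ : ι → Ω → ℝ} (hmeas : ∀ i, Measurable (γ i))
    (hindep : iIndepFun γ P) (hsymm : ∀ i, P.map (γ i) = P.map (fun ω => -(γ i ω)))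
    (p : ι → Prop) [DecidablePred p] :
    MeasurePreserving (signFlip p) (P.map fun ω i => γ i ω) (P.map fun ω i => γ i ω) := by
  refine ⟨measurable_signFlip p, ?_⟩
  have hf i : Measurable (if p i then Neg.neg else id : ℝ → ℝ) := by
    split_ifs
    exacts [measurable_neg, measurable_id]
  have hsign : signFlip p = fun v i => (if p i then Neg.neg else id : ℝ → ℝ) (v i) := by
    ext v i
    unfold signFlip
    split_ifs <;> rfl
  have _ i : IsProbabilityMeasure (P.map (γ i)) :=
    Measure.isProbabilityMeasure_map (hmeas i).aemeasurable
  rw [hindep.map_fun_eq_infinitePi_map₀ (measurable_pi_lambda _ hmeas).aemeasurable, hsign,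
    Measure.infinitePi_map_pi _ hf]
  congr 1
  ext1 i
  split_ifs
  · rw [Measure.map_map measurable_neg (hmeas i), hsymm i]; rfl
  · exact Measure.map_id

section PartialSum

variable {X : Type*} [NormedAddCommGroup X] [NormedSpace ℝ X]

def partialSum (x : ℕ → X) (v : ℕ → ℝ) (N : ℕ) : X :=
  ∑ n ∈ range (N + 1), v n • x n

theorem continuous_partialSum (x : ℕ → X) (N : ℕ) : Continuous fun v => partialSum x v N :=
  continuous_finsetSum _ fun n _ => (continuous_apply n).smul continuous_const

theorem partialSum_signFlip_of_le (x : ℕ → X) (v : ℕ → ℝ) {j k : ℕ} (hjk : j ≤ k) :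
    partialSum x (signFlip (k < ·) v) j = partialSum x v j :=
  sum_congr rfl fun n hn => by
    rw [signFlip, if_neg (by rw [mem_range] at hn; omega)]

theorem partialSum_add_partialSum_signFlip (x : ℕ → X) (v : ℕ → ℝ) {k N : ℕ} (hkN : k ≤ N) :
    partialSum x v N + partialSum x (signFlip (k < ·) v) N = (2 : ℝ) • partialSum x v k := by
  have hsplit (w : ℕ → ℝ) :
      partialSum x w N = partialSum x w k + ∑ n ∈ Ico (k + 1) (N + 1), w n • x n :=
    (sum_range_add_sum_Ico _ (by omega)).symm
  have htail : ∑ n ∈ Ico (k + 1) (N + 1), signFlip (k < ·) v n • x n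
      = -∑ n ∈ Ico (k + 1) (N + 1), v n • x n := by
    rw [← sum_neg_distrib]
    refine sum_congr rfl fun n hn => ?_
    rw [signFlip, if_pos (by rw [mem_Ico] at hn; omega), neg_smul]
  rw [hsplit v, hsplit, partialSum_signFlip_of_le x v le_rfl, htail, two_smul]
  abel

theorem levy_maximal_inequality {Ω : Type*} [MeasurableSpace Ω] {P : Measure Ω}
    [IsProbabilityMeasure P] {γ : ℕ → Ω → ℝ} (hmeas : ∀ n, Measurable (γ n))
    (hindep : iIndepFun γ P) (hsymm : ∀ n, P.map (γ n) = P.map (fun ω => -(γ n ω)))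
    (x : ℕ → X) (M N : ℕ) (ε : ℝ) :
    P {ω | ∃ k ∈ Icc M N, ε < ‖partialSum x (γ · ω) k - partialSum x (γ · ω) M‖}
      ≤ 2 * P {ω | ε < ‖partialSum x (γ · ω) N - partialSum x (γ · ω) M‖} := by
  borelize X
  set S : ℕ → (ℕ → ℝ) → X := fun k v => partialSum x v k - partialSum x v M
  have hS k : Continuous (S k) := (continuous_partialSum x k).sub (continuous_partialSum x M)
  have hγ : Measurable fun ω n => γ n ω := measurable_pi_lambda _ hmeas
  have hlaw {s : Set (ℕ → ℝ)} (hs : IsOpen s) :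
      P ((fun ω n => γ n ω) ⁻¹' s) = (P.map fun ω n => γ n ω) s :=
    (Measure.map_apply hγ hs.measurableSet).symm
  have hmax : IsOpen {v | ∃ k ∈ Icc M N, ε < ‖S k v‖} := by
    have hunion : {v | ∃ k ∈ Icc M N, ε < ‖S k v‖} = ⋃ k ∈ Icc M N, {v | ε < ‖S k v‖} := by
      ext; simp
    rw [hunion]
    exact isOpen_biUnion fun k _ => isOpen_lt continuous_const (hS k).norm
  refine (hlaw hmax).trans_le ((measure_exists_lt_norm_le_two_mul (fun k => (hS k).measurable)
    (fun k => measurePreserving_signFlip hmeas hindep hsymm (k < ·)) ?_ ?_).trans_eq ?_)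
  · intro j k hMj hjk v
    simp only [S, partialSum_signFlip_of_le x v hjk,
      partialSum_signFlip_of_le x v (hMj.trans hjk)]
  · intro k hMk hkN v
    simp only [S, partialSum_signFlip_of_le x v hMk, smul_sub, two_smul,
      ← partialSum_add_partialSum_signFlip x v hkN]
    abel
  · rw [← hlaw (isOpen_lt continuous_const (hS N).norm)]
    rfl

theorem measure_exists_ge_lt_norm_partialSum_sub_le {Ω : Type*} [MeasurableSpace Ω]
    {P : Measure Ω} [IsProbabilityMeasure P] {γ : ℕ → Ω → ℝ} (hmeas : ∀ n, Measurable (γ n))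
    (hindep : iIndepFun γ P) (hsymm : ∀ n, P.map (γ n) = P.map (fun ω => -(γ n ω)))
    (x : ℕ → X) (M : ℕ) (ε : ℝ) {c : ℝ≥0∞}
    (hc : ∀ N ≥ M, P {ω | ε < ‖partialSum x (γ · ω) N - partialSum x (γ · ω) M‖} ≤ c) :
    P {ω | ∃ k ≥ M, ε < ‖partialSum x (γ · ω) k - partialSum x (γ · ω) M‖} ≤ 2 * c := by
  set D : ℕ → Set Ω := fun N =>
    {ω | ∃ k ∈ Icc M (M + N), ε < ‖partialSum x (γ · ω) k - partialSum x (γ · ω) M‖}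
  have hD_mono : Monotone D := fun N N' hNN' ω ⟨k, hk, hω⟩ =>
    ⟨k, Icc_subset_Icc le_rfl (by omega) hk, hω⟩
  have hD_union : {ω | ∃ k ≥ M, ε < ‖partialSum x (γ · ω) k - partialSum x (γ · ω) M‖}
      = ⋃ N, D N := by
    ext ω
    simp only [D, Set.mem_ofPred_eq, Set.mem_iUnion, mem_Icc]
    exact ⟨fun ⟨k, hk, hω⟩ => ⟨k - M, k, ⟨hk, by omega⟩, hω⟩,
      fun ⟨_, k, hk, hω⟩ => ⟨k, hk.1, hω⟩⟩
  rw [hD_union, hD_mono.measure_iUnion]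
  exact iSup_le fun N => (levy_maximal_inequality hmeas hindep hsymm x M (M + N) ε).trans
    (mul_le_mul_right (hc _ (by omega)) 2)

theorem ae_cauchySeq_partialSum_of_tendstoInMeasure {Ω : Type*} [MeasurableSpace Ω]
    {P : Measure Ω} [IsProbabilityMeasure P] {γ : ℕ → Ω → ℝ} (hmeas : ∀ n, Measurable (γ n))
    (hindep : iIndepFun γ P) (hsymm : ∀ n, P.map (γ n) = P.map (fun ω => -(γ n ω)))
    (x : ℕ → X) {Sinf : Ω → X}
    (hconv : TendstoInMeasure P (fun N ω => partialSum x (γ · ω) N) atTop Sinf) :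
    ∀ᵐ ω ∂P, CauchySeq fun N => partialSum x (γ · ω) N := by
  refine ae_cauchySeq_of_forall_iInf_measure_eq_zero fun ε hε => ?_
  simp_rw [dist_eq_norm]
  refine nonpos_iff_eq_zero.1 (le_of_forall_gt_imp_ge_of_dense fun η hη => ?_)
  have hη' : 0 < η / 2 / 2 := ENNReal.half_pos (ENNReal.half_pos hη.ne').ne'
  obtain ⟨M, hM⟩ := eventually_atTop.1 ((tendstoInMeasure_iff_norm.1 hconv (ε / 2)
    (half_pos hε)).eventually (ge_mem_nhds hη'))
  calc ⨅ M, P {ω | ∃ k ≥ M, ε < ‖partialSum x (γ · ω) k - partialSum x (γ · ω) M‖}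
      ≤ P {ω | ∃ k ≥ M, ε < ‖partialSum x (γ · ω) k - partialSum x (γ · ω) M‖} := iInf_le _ M
    _ ≤ 2 * (η / 2) := measure_exists_ge_lt_norm_partialSum_sub_le hmeas hindep hsymm x M ε
        fun N hN => (measure_lt_norm_sub_le_add P _ _ Sinf ε).trans
          ((add_le_add (hM N hN) (hM M le_rfl)).trans_eq (ENNReal.add_halves _))
    _ = η := ENNReal.mul_div_cancel two_ne_zero ENNReal.ofNat_ne_top

end PartialSum

theorem conv_in_prob_implies_as_general {X : Type*} [NormedAddCommGroup X] [NormedSpace ℝ X]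
    {Ω : Type*} [MeasurableSpace Ω] (P : Measure Ω) [IsProbabilityMeasure P]
    (γ : ℕ → Ω → ℝ) (hmeas : ∀ n, Measurable (γ n))
    (hindep : ProbabilityTheory.iIndepFun γ P)
    (hsymm : ∀ n, Measure.map (γ n) P = Measure.map (fun ω => -(γ n ω)) P)
    (x : ℕ → X) (Sinf : Ω → X)
    (hprob : ∀ ε : ℝ, 0 < ε →
      Tendsto (fun N => P {ω | ε < ‖Sinf ω - ∑ n ∈ Finset.range (N + 1), γ n ω • x n‖})
        atTop (nhds 0)) :
    ∀ᵐ ω ∂P,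
      Tendsto (fun N => ∑ n ∈ Finset.range (N + 1), γ n ω • x n) atTop (nhds (Sinf ω)) := by
  have hconv : TendstoInMeasure P (fun N ω => partialSum x (γ · ω) N) atTop Sinf := by
    refine tendstoInMeasure_iff_norm.2 fun ε hε => tendsto_of_tendsto_of_tendsto_of_le_of_le
      tendsto_const_nhds (hprob (ε / 2) (half_pos hε)) (fun _ => zero_le)
      fun N => measure_mono fun ω hω => ?_
    simp only [Set.mem_ofPred_eq, partialSum, norm_sub_rev (Sinf ω)] at hω ⊢
    linarith
  exact hconv.ae_tendsto_of_ae_cauchySeq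
    (ae_cauchySeq_partialSum_of_tendstoInMeasure hmeas hindep hsymm x hconv)

/-- for partial sums Σ_N = Σ_{n≤N} γₙxₙ of independent symmetric scalar
multiples, convergence in probability to Σ_∞ implies almost sure norm convergence. -/
theorem conv_in_prob_implies_as {X : Type*} [NormedAddCommGroup X] [NormedSpace ℝ X]
    [CompleteSpace X] [TopologicalSpace.SeparableSpace X]
    {Ω : Type*} [MeasurableSpace Ω] (P : Measure Ω) [IsProbabilityMeasure P]
    (γ : ℕ → Ω → ℝ) (hmeas : ∀ n, Measurable (γ n))
    (hindep : ProbabilityTheory.iIndepFun γ P)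
    (hsymm : ∀ n, Measure.map (γ n) P = Measure.map (fun ω => -(γ n ω)) P)
    (x : ℕ → X) (Sinf : Ω → X) (hSinf : @Measurable Ω X _ (borel X) Sinf)
    (hprob : ∀ ε : ℝ, 0 < ε →
      Tendsto (fun N => P {ω | ε < ‖Sinf ω - ∑ n ∈ Finset.range (N + 1), γ n ω • x n‖})
        atTop (nhds 0)) :
    ∀ᵐ ω ∂P,
      Tendsto (fun N => ∑ n ∈ Finset.range (N + 1), γ n ω • x n) atTop (nhds (Sinf ω)) :=
  conv_in_prob_implies_as_general P γ hmeas hindep hsymm x Sinf hprob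
end
end
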